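/- arXiv:1803.04369 — 3 statements merged into one kernel-verified Lean document; each statement's English description precedes it below -/
import Mathlib

section
/- (Variable order Young integration) Let α, γ : [0,T] → (0,1) be C¹ regularity functions satisfying condition A1, let X ∈ C^{α(·)}([0,T];ℝ^d) and Y ∈ C^{γ(·)}([0,T];ℝ), and assume β := inf_{t∈[0,T]} (α(t) + γ(t)) > 1. Define Ξ(s,t) = Y_s · (X_t − X_s). Then the sewing map applies and produces an integral IΞ = ∫ Y dX satisfying |(IΞ)(s,t) − Y_s X_{s,t}| ≤ C_β ‖Y‖_{γ(·);[s,t]} ‖X‖_{α(·);[s,t]} |t−s|^β. -/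
/-!
The germ `Ξ s t = Y s • (X t - X s)` has coboundary
`Ξ s t - Ξ s u - Ξ u t = -(Y u - Y s) • (X t - X u)`. Condition A1 on `γ` moves the exponent
of the increment of `Y` from `s` to `u`, so both exponents sit at the same point and the
coboundary is `O(|t - s| ^ (α u + γ u)) = O(|t - s| ^ β)`: only the pointwise sum `α + γ`
matters.

Sewing then produces the integral as the limit of the Riemann sums of `Ξ` along the dyadic grids
of `[0, T]`; halving the mesh `h` of a grid with `N` cells changes the sum by at most `N K h ^ β`,
which is summable since `β > 1`. Comparing a grid sum over `[s, t]` with `Ξ s t` is Young's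
maximal inequality: among `N` cells there is a point whose two neighbours are at distance
`≤ 2 (t - s) / (N - 1)`, and removing it costs `O(N ^ (-β))`.
-/

open Finset Filter Topology

theorem sum_range_two_mul {M : Type*} [AddCommMonoid M] (f : ℕ → M) (n : ℕ) :
    ∑ i ∈ range (2 * n), f i = ∑ i ∈ range n, (f (2 * i) + f (2 * i + 1)) := by
  induction n with
  | zero => simp
  | succ n ih => rw [Nat.mul_succ, sum_range_succ, sum_range_succ, ih, sum_range_succ, add_assoc]

def succAbove (i k : ℕ) : ℕ := if k < i then k else k + 1

theorem succAbove_monotone (i : ℕ) : Monotone (succAbove i) := by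
  intro a b hab
  unfold succAbove
  split_ifs <;> omega

theorem sum_range_succAbove {M : Type*} [AddCommGroup M] (g : ℕ → ℕ → M) {j N : ℕ}
    (hj : j ≤ N) :
    ∑ k ∈ range (N + 2), g k (k + 1) =
      ∑ k ∈ range (N + 1), g (succAbove (j + 1) k) (succAbove (j + 1) (k + 1)) +
        (g j (j + 1) + g (j + 1) (j + 2) - g j (j + 2)) := by
  obtain ⟨M, rfl⟩ := Nat.exists_eq_add_of_le hj
  have hlow : ∀ k ∈ range j,
      g (succAbove (j + 1) k) (succAbove (j + 1) (k + 1)) = g k (k + 1) := by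
    intro k hk
    have hk := mem_range.mp hk
    simp only [succAbove, if_pos (show k < j + 1 by omega), if_pos (show k + 1 < j + 1 by omega)]
  have hhigh : ∀ k ∈ range M,
      g (succAbove (j + 1) (j + (k + 1))) (succAbove (j + 1) (j + (k + 1) + 1)) =
        g (j + (k + 1 + 1)) (j + (k + 1 + 1) + 1) := by
    intro k _
    simp only [succAbove, if_neg (show ¬ j + (k + 1) < j + 1 by omega),
      if_neg (show ¬ j + (k + 1) + 1 < j + 1 by omega)]
    ring_nf
  have hmid : g (succAbove (j + 1) (j + 0)) (succAbove (j + 1) (j + 0 + 1)) = g j (j + 2) := by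
    simp [succAbove]
  rw [show j + M + 2 = j + (M + 2) by ring, sum_range_add, sum_range_succ', sum_range_succ',
    show j + M + 1 = j + (M + 1) by ring, sum_range_add, sum_range_succ', sum_congr rfl hlow,
    sum_congr rfl hhigh, hmid]
  ring_nf
  abel

theorem exists_sub_le_of_monotone {p : ℕ → ℝ} (hp : Monotone p) (N : ℕ) :
    ∃ j ≤ N, p (j + 2) - p j ≤ 2 * (p (N + 2) - p 0) / (N + 1) := by
  have hsum : ∑ j ∈ range (N + 1), (p (j + 2) - p j) =
      p (N + 2) - p 1 + (p (N + 1) - p 0) := by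
    rw [← sum_range_sub (fun j => p (j + 1)), ← sum_range_sub p, ← sum_add_distrib]
    refine sum_congr rfl fun j _ => ?_
    ring
  have hle : ∑ j ∈ range (N + 1), (p (j + 2) - p j) ≤
      ∑ _j ∈ range (N + 1), 2 * (p (N + 2) - p 0) / (N + 1) := by
    rw [hsum, sum_const, card_range, nsmul_eq_mul]
    have := hp (Nat.zero_le 1)
    have := hp (Nat.le_succ (N + 1))
    push_cast
    rw [mul_div_cancel₀ _ (by positivity)]
    linarith
  obtain ⟨j, hj, hjle⟩ := exists_le_of_sum_le nonempty_range_add_one hle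
  exact ⟨j, Nat.lt_succ_iff.mp (mem_range.mp hj), hjle⟩

theorem norm_sum_le_of_eq_zero_or {ι E : Type*} [SeminormedAddCommGroup E] {f : ι → E}
    {P : ι → Prop} {B : ℝ} (S : Finset ι) (hB : 0 ≤ B) (hP : ∀ i j, P i → P j → i = j)
    (hf : ∀ i, f i = 0 ∨ P i ∧ ‖f i‖ ≤ B) : ‖∑ i ∈ S, f i‖ ≤ B := by
  by_cases h : ∃ i ∈ S, P i
  · obtain ⟨i, hiS, hi⟩ := h
    rw [sum_eq_single_of_mem i hiS fun j _ hji =>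
      (hf j).resolve_right fun hj => hji (hP j i hj.1 hi)]
    exact (hf i).elim (fun h0 => by simpa [h0] using hB) (·.2)
  · push Not at h
    rw [sum_eq_zero fun j hj => (hf j).resolve_right fun hj' => h j hj hj'.1, norm_zero]
    exact hB

theorem min_sub_min_le_sub {x y t : ℝ} (hxy : x ≤ y) : min y t - min x t ≤ y - x := by
  simp only [min_def]
  split_ifs <;> linarith

/-- The `m = 0` term is `0 ^ (-β) = 0`, so this is `2 ^ β ζ(β)`. -/
noncomputable def youngConst (β : ℝ) : ℝ := 2 ^ β * ∑' m : ℕ, (m : ℝ) ^ (-β)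

theorem youngConst_pos {β : ℝ} (hβ : 1 < β) : 0 < youngConst β :=
  mul_pos (by positivity) ((Real.summable_nat_rpow.mpr (by linarith)).tsum_pos
    (fun _ => by positivity) 1 (by simp))

section Sewing

variable {E : Type*} [NormedAddCommGroup E]

def CoboundaryBound (Ξ : ℝ → ℝ → E) (T K β : ℝ) : Prop :=
  ∀ s u t, 0 ≤ s → s ≤ u → u ≤ t → t ≤ T → ‖Ξ s t - Ξ s u - Ξ u t‖ ≤ K * (t - s) ^ β

namespace CoboundaryBound

variable {Ξ : ℝ → ℝ → E} {T K β : ℝ}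

theorem apply_self (hΞ : CoboundaryBound Ξ T K β) (hβ : 0 < β) {x : ℝ} (hx : 0 ≤ x)
    (hxT : x ≤ T) : Ξ x x = 0 := by
  have := hΞ x x x hx le_rfl le_rfl hxT
  simpa [Real.zero_rpow hβ.ne'] using this

theorem norm_sum_sub_le (hΞ : CoboundaryBound Ξ T K β) (hK : 0 ≤ K) (hβ : 0 < β) (N : ℕ) :
    ∀ p : ℕ → ℝ, Monotone p → 0 ≤ p 0 → p N ≤ T →
      ‖∑ k ∈ range N, Ξ (p k) (p (k + 1)) - Ξ (p 0) (p N)‖ ≤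
        K * (2 * (p N - p 0)) ^ β * ∑ m ∈ range N, (m : ℝ) ^ (-β) := by
  induction N with
  | zero =>
    intro p _ hp0 hpT
    simp [hΞ.apply_self hβ hp0 hpT]
  | succ N ih =>
    rcases N with _ | N
    · intro p _ _ _
      simp [Real.zero_rpow (neg_ne_zero.mpr hβ.ne')]
    intro p hp hp0 hpT
    obtain ⟨j, hjN, hj⟩ := exists_sub_le_of_monotone hp N
    set q : ℕ → ℝ := p ∘ succAbove (j + 1)
    have hq0 : q 0 = p 0 := by simp [q, succAbove]
    have hqN : q (N + 1) = p (N + 2) := by simp [q, succAbove, show ¬ N + 1 < j + 1 by omega]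
    have hq := ih q (hp.comp (succAbove_monotone _)) (by rwa [hq0]) (by rwa [hqN])
    rw [hq0, hqN] at hq
    have hδ := hΞ (p j) (p (j + 1)) (p (j + 2)) (hp0.trans (hp (Nat.zero_le _)))
      (hp (by omega)) (hp (by omega)) ((hp (by omega)).trans hpT)
    have hL : 0 ≤ 2 * (p (N + 2) - p 0) := by linarith [hp (Nat.zero_le (N + 2))]
    have hδ' : K * (p (j + 2) - p j) ^ β ≤
        K * (2 * (p (N + 2) - p 0)) ^ β * (N + 1 : ℝ) ^ (-β) := by
      rw [mul_assoc, Real.rpow_neg (by positivity), ← div_eq_mul_inv,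
        ← Real.div_rpow hL (by positivity)]
      exact mul_le_mul_of_nonneg_left
        (Real.rpow_le_rpow (by linarith [hp (show j ≤ j + 2 by omega)]) hj hβ.le) hK
    rw [sum_range_succAbove (fun a b => Ξ (p a) (p b)) hjN,
      sum_range_succ (fun m : ℕ => (m : ℝ) ^ (-β)) (N + 1), mul_add]
    calc _ = ‖(∑ k ∈ range (N + 1), Ξ (q k) (q (k + 1)) - Ξ (p 0) (p (N + 2))) -
          (Ξ (p j) (p (j + 2)) - Ξ (p j) (p (j + 1)) - Ξ (p (j + 1)) (p (j + 2)))‖ := by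
            congr 1; simp only [q, Function.comp]; abel
      _ ≤ _ := norm_sub_le_of_le hq (hδ.trans hδ')
      _ = _ := by push_cast; ring

def gridSum (Ξ : ℝ → ℝ → E) (h t : ℝ) (N : ℕ) : E :=
  ∑ k ∈ range N, Ξ (min (k * h) t) (min ((k + 1) * h) t)

theorem norm_gridSum_half_sub_le (hΞ : CoboundaryBound Ξ T K β) (hK : 0 ≤ K) (hβ : 0 ≤ β)
    {h t : ℝ} (hh : 0 ≤ h) (ht : 0 ≤ t) (htT : t ≤ T) (N : ℕ) :
    ‖gridSum Ξ (h / 2) t (2 * N) - gridSum Ξ h t N‖ ≤ N * (K * h ^ β) := by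
  unfold gridSum
  rw [sum_range_two_mul, ← sum_sub_distrib]
  refine (norm_sum_le_of_le (range N) (n := fun _ => K * h ^ β) fun k _ => ?_).trans_eq
    (by simp)
  set a := min (k * h) t
  set m := min ((k + 1 / 2) * h) t
  set b := min ((k + 1) * h) t
  have ha : 0 ≤ a := le_min (by positivity) ht
  have ham : a ≤ m := min_le_min_right _ (by nlinarith)
  have hmb : m ≤ b := min_le_min_right _ (by nlinarith)
  have hbT : b ≤ T := (min_le_right _ _).trans htT
  have hba : b - a ≤ h := by
    have := min_sub_min_le_sub (t := t) (show (k : ℝ) * h ≤ (k + 1) * h by nlinarith)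
    linarith
  calc _ = ‖Ξ a b - Ξ a m - Ξ m b‖ := by
        rw [← norm_neg]
        congr 1
        simp only [a, m, b]
        push_cast
        ring_nf
        abel
    _ ≤ K * (b - a) ^ β := hΞ a m b ha ham hmb hbT
    _ ≤ K * h ^ β := by gcongr; linarith

/-- Only the grid cell containing `s` contributes. -/
theorem norm_gridSum_sub_sub_le (hΞ : CoboundaryBound Ξ T K β) (hK : 0 ≤ K) (hβ : 0 < β)
    {h s t : ℝ} (hh : 0 ≤ h) (hs : 0 ≤ s) (hst : s ≤ t) (htT : t ≤ T) (N : ℕ) :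
    ‖gridSum Ξ h t N - gridSum Ξ h s N -
        ∑ k ∈ range N, Ξ (max s (min (k * h) t)) (max s (min ((k + 1) * h) t))‖ ≤ K * h ^ β := by
  have hss : Ξ s s = 0 := hΞ.apply_self hβ hs (hst.trans htT)
  unfold gridSum
  rw [← sum_sub_distrib, ← sum_sub_distrib]
  refine norm_sum_le_of_eq_zero_or _ (by positivity)
    (P := fun k : ℕ => k * h < s ∧ s < (k + 1) * h) (fun i j hi hj => ?_) (fun k => ?_)
  · have hij : (i : ℝ) < j + 1 := lt_of_mul_lt_mul_right (hi.1.trans hj.2) hh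
    have hji : (j : ℝ) < i + 1 := lt_of_mul_lt_mul_right (hj.1.trans hi.2) hh
    norm_cast at hij hji
    omega
  set a := (k : ℝ) * h
  set b := ((k : ℝ) + 1) * h
  have ha : 0 ≤ a := by positivity
  have hab : a ≤ b := by nlinarith
  rcases le_or_gt b s with hbs | hsb
  · left
    rw [min_eq_left (hab.trans (hbs.trans hst)), min_eq_left (hbs.trans hst),
      min_eq_left (hab.trans hbs), min_eq_left hbs, max_eq_left (hab.trans hbs), max_eq_left hbs,
      hss]
    abel
  rcases le_or_gt s a with hsa | has
  · left
    rw [min_eq_right hsa, min_eq_right (hsa.trans hab), max_eq_right (le_min hsa hst),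
      max_eq_right (le_min (hsa.trans hab) hst), hss]
    abel
  · right
    refine ⟨⟨has, hsb⟩, ?_⟩
    rw [min_eq_left (has.le.trans hst), min_eq_left has.le, min_eq_right hsb.le,
      max_eq_left has.le, max_eq_right (le_min hsb.le hst)]
    calc _ ≤ K * (min b t - a) ^ β :=
          hΞ a s (min b t) ha has.le (le_min hsb.le hst) ((min_le_right _ _).trans htT)
      _ ≤ K * h ^ β := by
          gcongr
          · linarith [le_min hsb.le hst]
          · linarith [min_le_left b t]

theorem norm_gridSum_sub_sub_le_youngConst (hΞ : CoboundaryBound Ξ T K β) (hK : 0 ≤ K)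
    (hβ : 1 < β) {h s t : ℝ} (hh : 0 ≤ h) (hs : 0 ≤ s) (hst : s ≤ t) (htT : t ≤ T) {N : ℕ}
    (hN : t ≤ N * h) :
    ‖gridSum Ξ h t N - gridSum Ξ h s N - Ξ s t‖ ≤
      K * h ^ β + youngConst β * K * (t - s) ^ β := by
  set p : ℕ → ℝ := fun k => max s (min (k * h) t)
  have hp : Monotone p := fun i j hij =>
    max_le_max le_rfl (min_le_min_right _ (mul_le_mul_of_nonneg_right (Nat.cast_le.mpr hij) hh))
  have hp0 : p 0 = s := by simp [p, hs.trans hst, hs]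
  have hpN : p N = t := by simp [p, min_eq_right hN, hst]
  have hyoung := hΞ.norm_sum_sub_le hK (by linarith) N p hp (hp0 ▸ hs) (hpN ▸ htT)
  rw [hp0, hpN] at hyoung
  simp only [p, Nat.cast_add, Nat.cast_one] at hyoung
  have hzeta : ∑ m ∈ range N, (m : ℝ) ^ (-β) ≤ ∑' m : ℕ, (m : ℝ) ^ (-β) :=
    (Real.summable_nat_rpow.mpr (by linarith)).sum_le_tsum _ fun _ _ => by positivity
  calc _ = ‖(gridSum Ξ h t N - gridSum Ξ h s N -
          ∑ k ∈ range N, Ξ (max s (min (k * h) t)) (max s (min ((k + 1) * h) t))) +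
        (∑ k ∈ range N, Ξ (max s (min (k * h) t)) (max s (min ((k + 1) * h) t)) - Ξ s t)‖ := by
          congr 1; abel
    _ ≤ K * h ^ β + K * (2 * (t - s)) ^ β * ∑ m ∈ range N, (m : ℝ) ^ (-β) :=
          norm_add_le_of_le (hΞ.norm_gridSum_sub_sub_le hK (by linarith) hh hs hst htT N) hyoung
    _ ≤ K * h ^ β + youngConst β * K * (t - s) ^ β := by
          rw [Real.mul_rpow zero_le_two (by linarith), youngConst]
          have : 0 ≤ K * (2 ^ β * (t - s) ^ β) := by positivity
          nlinarith

theorem cauchySeq_gridSum_dyadic (hΞ : CoboundaryBound Ξ T K β) (hK : 0 ≤ K) (hβ : 1 < β)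
    {t : ℝ} (ht : 0 ≤ t) (htT : t ≤ T) :
    CauchySeq fun n : ℕ => gridSum Ξ (T / 2 ^ n) t (2 ^ n) := by
  have hr : (2 : ℝ) < 2 ^ β := by
    simpa using Real.rpow_lt_rpow_of_exponent_lt one_lt_two hβ
  refine cauchySeq_of_le_geometric (2 / 2 ^ β) (K * T ^ β)
    ((div_lt_one (by positivity)).mpr hr) fun n => ?_
  have hT : 0 ≤ T := ht.trans htT
  rw [dist_comm, dist_eq_norm, pow_succ (2 : ℝ), ← div_div, pow_succ' (2 : ℕ)]
  calc _ ≤ ((2 ^ n : ℕ) : ℝ) * (K * (T / 2 ^ n) ^ β) :=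
        hΞ.norm_gridSum_half_sub_le hK (by linarith) (by positivity) ht htT _
    _ = K * T ^ β * (2 / 2 ^ β) ^ n := by
        rw [Real.div_rpow hT (by positivity), ← Real.rpow_pow_comm zero_le_two, div_pow]
        push_cast
        field_simp

theorem exists_sewing [CompleteSpace E] (hΞ : CoboundaryBound Ξ T K β) (hK : 0 ≤ K)
    (hβ : 1 < β) :
    ∃ I : ℝ → E, I 0 = 0 ∧ ∀ s t, 0 ≤ s → s ≤ t → t ≤ T →
      ‖I t - I s - Ξ s t‖ ≤ youngConst β * K * (t - s) ^ β := by
  set J : ℕ → ℝ → E := fun n t => gridSum Ξ (T / 2 ^ n) t (2 ^ n)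
  set L : ℝ → E := fun t => limUnder atTop fun n => J n t
  have hL : ∀ t, 0 ≤ t → t ≤ T → Tendsto (fun n => J n t) atTop (𝓝 (L t)) :=
    fun t ht htT => (hΞ.cauchySeq_gridSum_dyadic hK hβ ht htT).tendsto_limUnder
  refine ⟨fun t => L t - L 0, sub_self _, fun s t hs hst htT => ?_⟩
  have hT : 0 ≤ T := (hs.trans hst).trans htT
  have hmesh : Tendsto (fun n : ℕ => T / 2 ^ n) atTop (𝓝 0) :=
    tendsto_const_nhds.div_atTop (tendsto_pow_atTop_atTop_of_one_lt one_lt_two)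
  have hlhs : Tendsto (fun n => ‖J n t - J n s - Ξ s t‖) atTop (𝓝 ‖L t - L s - Ξ s t‖) :=
    (((hL t (hs.trans hst) htT).sub (hL s hs (hst.trans htT))).sub_const _).norm
  set C := youngConst β * K * (t - s) ^ β
  have hrhs : Tendsto (fun n : ℕ => K * (T / 2 ^ n) ^ β + C) atTop (𝓝 C) := by
    simpa [Real.zero_rpow (show β ≠ 0 by linarith)] using
      ((hmesh.rpow_const (p := β) (Or.inr (by linarith))).const_mul K).add_const C
  rw [sub_sub_sub_cancel_right]
  refine le_of_tendsto_of_tendsto' hlhs hrhs fun n => ?_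
  refine hΞ.norm_gridSum_sub_sub_le_youngConst hK hβ (by positivity) hs hst htT ?_
  push_cast
  rwa [mul_div_cancel₀ _ (by positivity)]

end CoboundaryBound

end Sewing

section VariableOrder

open Set

def ConditionA1 (γ : ℝ → ℝ) (T C : ℝ) : Prop :=
  ∀ t ∈ Icc (0 : ℝ) T, ∀ h : ℝ, 0 < |h| → |h| ≤ 1 → t + h ∈ Icc (0 : ℝ) T →
    |h| ^ (γ t - γ (t + h)) ≤ C

def VarHolderWith {F : Type*} [NormedAddCommGroup F] (K : ℝ) (α : ℝ → ℝ) (T : ℝ)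
    (X : ℝ → F) : Prop :=
  ∀ s t, 0 ≤ s → s < t → t ≤ T → ‖X t - X s‖ ≤ K * (t - s) ^ α s

theorem ConditionA1.rpow_le_mul_rpow {γ : ℝ → ℝ} {T C s u : ℝ} (hA1 : ConditionA1 γ T C)
    (hs : s ∈ Icc 0 T) (hu : u ∈ Icc 0 T) (hsu : s < u) (hγ : γ s ≤ γ u + 1) :
    (u - s) ^ γ s ≤ max C T * (u - s) ^ γ u := by
  have hus : 0 < u - s := sub_pos.mpr hsu
  have hshift : (u - s) ^ (γ s - γ u) ≤ max C T := by
    rcases le_or_gt (u - s) 1 with hle | hgt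
    · have := hA1 s hs (u - s) (by rwa [abs_of_pos hus]) (by rwa [abs_of_pos hus])
        (by rwa [add_sub_cancel])
      rw [abs_of_pos hus, add_sub_cancel] at this
      exact this.trans (le_max_left _ _)
    · calc (u - s) ^ (γ s - γ u) ≤ u - s := Real.rpow_le_self_of_one_le hgt.le (by linarith)
        _ ≤ T := by linarith [hu.2, hs.1]
        _ ≤ max C T := le_max_right _ _
  calc (u - s) ^ γ s = (u - s) ^ (γ s - γ u) * (u - s) ^ γ u := by
        rw [← Real.rpow_add hus, sub_add_cancel]
    _ ≤ max C T * (u - s) ^ γ u := by gcongr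

theorem rpow_le_max_mul_rpow {x T e β : ℝ} (hx : 0 ≤ x) (hxT : x ≤ T) (hβ : 0 ≤ β)
    (hβe : β ≤ e) (he : e ≤ β + 1) : x ^ e ≤ max 1 T * x ^ β := by
  rcases le_or_gt x 1 with hx1 | hx1
  · calc x ^ e ≤ x ^ β := Real.rpow_le_rpow_of_exponent_ge' hx hx1 hβ hβe
      _ ≤ max 1 T * x ^ β := le_mul_of_one_le_left (by positivity) (le_max_left _ _)
  · calc x ^ e = x ^ (e - β) * x ^ β := by rw [← Real.rpow_add (by linarith), sub_add_cancel]
      _ ≤ x * x ^ β := by gcongr; exact Real.rpow_le_self_of_one_le hx1.le (by linarith)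
      _ ≤ max 1 T * x ^ β := by gcongr; exact hxT.trans (le_max_right _ _)

theorem coboundaryBound_smul_sub {F : Type*} [NormedAddCommGroup F] [NormedSpace ℝ F]
    {T CA β KX KY : ℝ} {α γ : ℝ → ℝ} {X : ℝ → F} {Y : ℝ → ℝ}
    (hα : ∀ t ∈ Icc (0 : ℝ) T, 0 < α t ∧ α t < 1)
    (hγ : ∀ t ∈ Icc (0 : ℝ) T, 0 < γ t ∧ γ t < 1)
    (hA1 : ConditionA1 γ T CA) (hβ : 1 < β) (hβle : ∀ t ∈ Icc (0 : ℝ) T, β ≤ α t + γ t)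
    (hKX : 0 ≤ KX) (hKY : 0 ≤ KY) (hX : VarHolderWith KX α T X)
    (hY : VarHolderWith KY γ T Y) :
    CoboundaryBound (fun s t => Y s • (X t - X s)) T (max CA T * max 1 T * KY * KX) β := by
  intro s u t hs hsu hut htT
  have hδ : Y s • (X t - X s) - Y s • (X u - X s) - Y u • (X t - X u) =
      -((Y u - Y s) • (X t - X u)) := by module
  have hCA : 0 ≤ max CA T := le_max_of_le_right (hs.trans (hsu.trans (hut.trans htT)))
  have hbound : 0 ≤ max CA T * max 1 T * KY * KX * (t - s) ^ β := by
    have := Real.rpow_nonneg (sub_nonneg.2 (hsu.trans hut)) β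
    positivity
  rw [hδ, norm_neg, norm_smul]
  rcases hsu.eq_or_lt with rfl | hsu
  · simpa using hbound
  rcases hut.eq_or_lt with rfl | hut
  · simpa using hbound
  have hsT : s ∈ Icc 0 T := ⟨hs, by linarith⟩
  have huT : u ∈ Icc 0 T := ⟨by linarith, by linarith⟩
  obtain ⟨hαu, hαu1⟩ := hα u huT
  obtain ⟨hγs, hγs1⟩ := hγ s hsT
  obtain ⟨hγu, hγu1⟩ := hγ u huT
  have hYu : ‖Y u - Y s‖ ≤ KY * (max CA T * (t - s) ^ γ u) :=
    (hY s u hs hsu (by linarith)).trans <| mul_le_mul_of_nonneg_left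
      ((hA1.rpow_le_mul_rpow hsT huT hsu (by linarith)).trans (by gcongr)) hKY
  have hXu : ‖X t - X u‖ ≤ KX * (t - s) ^ α u :=
    (hX u t (by linarith) hut htT).trans (by gcongr)
  calc ‖Y u - Y s‖ * ‖X t - X u‖
        ≤ KY * (max CA T * (t - s) ^ γ u) * (KX * (t - s) ^ α u) :=
        mul_le_mul hYu hXu (norm_nonneg _)
          (mul_nonneg hKY (mul_nonneg hCA (Real.rpow_nonneg (by linarith) _)))
    _ = max CA T * KY * KX * (t - s) ^ (α u + γ u) := by
        rw [Real.rpow_add (by linarith)]; ring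
    _ ≤ max CA T * KY * KX * (max 1 T * (t - s) ^ β) := by
        gcongr
        exact rpow_le_max_mul_rpow (by linarith) (by linarith) (by linarith) (hβle u huT)
          (by linarith)
    _ = max CA T * max 1 T * KY * KX * (t - s) ^ β := by ring

end VariableOrder

theorem stmt4_general {d : ℕ} (T : ℝ) (hT : 0 < T) (α γ : ℝ → ℝ)
    (hα01 : ∀ t ∈ Set.Icc (0:ℝ) T, 0 < α t ∧ α t < 1)
    (hγ01 : ∀ t ∈ Set.Icc (0:ℝ) T, 0 < γ t ∧ γ t < 1)
    (CA : ℝ)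
    (hA1γ : ∀ t ∈ Set.Icc (0:ℝ) T, ∀ h : ℝ, 0 < |h| → |h| ≤ 1 →
      t + h ∈ Set.Icc (0:ℝ) T → |h| ^ (γ t - γ (t + h)) ≤ CA)
    (β : ℝ) (hβ : 1 < β) (hβle : ∀ t ∈ Set.Icc (0:ℝ) T, β ≤ α t + γ t)
    (X : ℝ → EuclideanSpace ℝ (Fin d)) (Y : ℝ → ℝ)
    (KX KY : ℝ) (hKX : 0 ≤ KX) (hKY : 0 ≤ KY)
    (hX : ∀ s t : ℝ, 0 ≤ s → s < t → t ≤ T → ‖X t - X s‖ ≤ KX * (t - s) ^ α s)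
    (hY : ∀ s t : ℝ, 0 ≤ s → s < t → t ≤ T → |Y t - Y s| ≤ KY * (t - s) ^ γ s) :
    ∃ Cβ > (0:ℝ), ∃ I : ℝ → EuclideanSpace ℝ (Fin d), I 0 = 0 ∧
      ∀ s t : ℝ, 0 ≤ s → s ≤ t → t ≤ T →
        ‖(I t - I s) - Y s • (X t - X s)‖ ≤ Cβ * KY * KX * (t - s) ^ β := by
  have hM : 0 < max CA T * max 1 T :=
    mul_pos (lt_max_of_lt_right hT) (lt_max_of_lt_left one_pos)
  have hΞ := coboundaryBound_smul_sub hα01 hγ01 hA1γ hβ hβle hKX hKY hX hY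
  obtain ⟨I, hI0, hI⟩ := hΞ.exists_sewing (by positivity) hβ
  refine ⟨youngConst β * (max CA T * max 1 T), mul_pos (youngConst_pos hβ) hM, I, hI0,
    fun s t hs hst htT => (hI s t hs hst htT).trans_eq (by ring)⟩

/-- Young integration of variable order: if the local complementary Young condition
`α(t) + γ(t) ≥ β > 1` holds for all `t`, the Young integral exists with the usual estimate. -/
theorem stmt4 {d : ℕ} (T : ℝ) (hT : 0 < T) (α γ : ℝ → ℝ)
    (hα : ContDiffOn ℝ 1 α (Set.Icc 0 T)) (hγ : ContDiffOn ℝ 1 γ (Set.Icc 0 T))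
    (hα01 : ∀ t ∈ Set.Icc (0:ℝ) T, 0 < α t ∧ α t < 1)
    (hγ01 : ∀ t ∈ Set.Icc (0:ℝ) T, 0 < γ t ∧ γ t < 1)
    (CA : ℝ)
    (hA1α : ∀ t ∈ Set.Icc (0:ℝ) T, ∀ h : ℝ, 0 < |h| → |h| ≤ 1 →
      t + h ∈ Set.Icc (0:ℝ) T → |h| ^ (α t - α (t + h)) ≤ CA)
    (hA1γ : ∀ t ∈ Set.Icc (0:ℝ) T, ∀ h : ℝ, 0 < |h| → |h| ≤ 1 →
      t + h ∈ Set.Icc (0:ℝ) T → |h| ^ (γ t - γ (t + h)) ≤ CA)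
    (β : ℝ) (hβ : 1 < β) (hβle : ∀ t ∈ Set.Icc (0:ℝ) T, β ≤ α t + γ t)
    (X : ℝ → EuclideanSpace ℝ (Fin d)) (Y : ℝ → ℝ)
    (KX KY : ℝ) (hKX : 0 ≤ KX) (hKY : 0 ≤ KY)
    (hX : ∀ s t : ℝ, 0 ≤ s → s < t → t ≤ T → ‖X t - X s‖ ≤ KX * (t - s) ^ α s)
    (hY : ∀ s t : ℝ, 0 ≤ s → s < t → t ≤ T → |Y t - Y s| ≤ KY * (t - s) ^ γ s) :
    ∃ Cβ > (0:ℝ), ∃ I : ℝ → EuclideanSpace ℝ (Fin d), I 0 = 0 ∧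
      ∀ s t : ℝ, 0 ≤ s → s ≤ t → t ≤ T →
        ‖(I t - I s) - Y s • (X t - X s)‖ ≤ Cβ * KY * KX * (t - s) ^ β :=
  stmt4_general T hT α γ hα01 hγ01 CA hA1γ β hβ hβle X Y KX KY hKX hKY hX hY
end

section
/- Let α : [0,T] → (1/3,1), X ∈ C^{α(·)}([0,T];ℝ^d), f ∈ C²_b(ℝⁿ;ℝⁿ), and (Y,Y′) ∈ D_X^{α(·)}([0,T];ℝⁿ). Then (f(Y), Df(Y)Y′) ∈ D_X^{α(·)}([0,T];ℝⁿ), and there is a constant C depending on ‖f‖_{C²_b}, α, T, ‖X‖_{α(·)} such that ‖f(Y), Df(Y)Y′‖_{X,α(·)} ≤ C (|Y₀| + |Y′₀| + ‖Y,Y′‖_{X,α(·)}). -/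
/-!
Write `δY = Y'_s δX + R_{s,t}`. As `f ∈ C²_b`, `Df` is Lipschitz and
`f(Y_t) - f(Y_s) - Df(Y_s) δY = O(|δY|²)`, so the remainder of `f(Y)` is this Taylor term plus
`Df(Y_s) R_{s,t}`; both are `O((t-s)^{2α(s)})` because `Y'` is bounded on `[0,T]` and hence
`|δY| = O((t-s)^{α(s)})`. Similarly `Df(Y_t)Y'_t - Df(Y_s)Y'_s` splits as
`(Df(Y_t) - Df(Y_s))Y'_t + Df(Y_s)(Y'_t - Y'_s)`. The resulting constants vanish when `Y'_0` and
the semi-norm of `Y` do, so they are absorbed into `C (|Y_0| + |Y'_0| + ‖Y,Y'‖)`.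
-/

open ContinuousLinearMap

section FrechetBounds

variable {F G : Type*} [NormedAddCommGroup F] [NormedSpace ℝ F] [NormedAddCommGroup G]
  [NormedSpace ℝ G]

theorem norm_fderiv_sub_le_of_norm_iteratedFDeriv_two_le {f : F → G} {K : ℝ}
    (hf : ContDiff ℝ 2 f) (hK : ∀ x, ‖iteratedFDeriv ℝ 2 f x‖ ≤ K) (a b : F) :
    ‖fderiv ℝ f b - fderiv ℝ f a‖ ≤ K * ‖b - a‖ := by
  have hdf : Differentiable ℝ (fderiv ℝ f) :=
    (hf.fderiv_right (m := 1) le_rfl).differentiable one_ne_zero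
  have hbound (x : F) : ‖fderiv ℝ (fderiv ℝ f) x‖ ≤ K := by
    rw [← norm_iteratedFDeriv_zero (𝕜 := ℝ) (f := fderiv ℝ (fderiv ℝ f)),
      norm_iteratedFDeriv_fderiv, norm_iteratedFDeriv_fderiv]
    exact hK x
  exact convex_univ.norm_image_sub_le_of_norm_fderiv_le (fun x _ => hdf x) (fun x _ => hbound x)
    trivial trivial

theorem norm_sub_sub_fderiv_apply_le {f : F → G} {K : ℝ} (hf : Differentiable ℝ f) (hK : 0 ≤ K)
    (hDf : ∀ a b, ‖fderiv ℝ f b - fderiv ℝ f a‖ ≤ K * ‖b - a‖) (a b : F) :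
    ‖f b - f a - fderiv ℝ f a (b - a)‖ ≤ K * ‖b - a‖ ^ 2 := by
  refine (convex_closedBall a ‖b - a‖).norm_image_sub_le_of_norm_fderiv_le' (C := K * ‖b - a‖)
    (fun x _ => hf x) (fun x hx => ?_) (Metric.mem_closedBall_self (norm_nonneg _)) ?_
    |>.trans_eq (by ring)
  · rw [Metric.mem_closedBall, dist_eq_norm] at hx
    exact (hDf a x).trans (mul_le_mul_of_nonneg_left hx hK)
  · simp [dist_eq_norm]

end FrechetBounds

theorem norm_comp_sub_comp_le {E F G : Type*} [SeminormedAddCommGroup E] [NormedSpace ℝ E]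
    [SeminormedAddCommGroup F] [NormedSpace ℝ F] [SeminormedAddCommGroup G] [NormedSpace ℝ G]
    (D₁ D₂ : F →L[ℝ] G) (L₁ L₂ : E →L[ℝ] F) :
    ‖D₂ ∘L L₂ - D₁ ∘L L₁‖ ≤ ‖D₂ - D₁‖ * ‖L₂‖ + ‖D₁‖ * ‖L₂ - L₁‖ := by
  have : D₂ ∘L L₂ - D₁ ∘L L₁ = (D₂ - D₁) ∘L L₂ + D₁ ∘L (L₂ - L₁) := by
    rw [sub_comp, comp_sub]
    abel
  rw [this]
  exact (norm_add_le _ _).trans (add_le_add (opNorm_comp_le _ _) (opNorm_comp_le _ _))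

theorem Real.rpow_le_max_one {p a T : ℝ} (hp : 0 ≤ p) (hpT : p ≤ T) (ha0 : 0 ≤ a)
    (ha1 : a ≤ 1) : p ^ a ≤ max 1 T := by
  rcases le_or_gt p 1 with hp1 | hp1
  · exact (Real.rpow_le_one hp hp1 ha0).trans (le_max_left _ _)
  · calc p ^ a ≤ p ^ (1 : ℝ) := Real.rpow_le_rpow_of_exponent_le hp1.le ha1
      _ = p := Real.rpow_one p
      _ ≤ max 1 T := hpT.trans (le_max_right _ _)

theorem Real.rpow_two_mul_eq_sq {p : ℝ} (hp : 0 ≤ p) (a : ℝ) : p ^ (2 * a) = (p ^ a) ^ 2 := by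
  rw [mul_comm, Real.rpow_mul hp, Real.rpow_two]

theorem norm_le_norm_zero_add_of_varHolder {V : Type*} [SeminormedAddCommGroup V] {Z : ℝ → V}
    {α : ℝ → ℝ} {K T : ℝ} (hK : 0 ≤ K)
    (hZ : ∀ s t : ℝ, 0 ≤ s → s < t → t ≤ T → ‖Z t - Z s‖ ≤ K * (t - s) ^ α s)
    (hα0 : 0 ≤ α 0) (hα1 : α 0 ≤ 1) {t : ℝ} (ht : 0 ≤ t) (htT : t ≤ T) :
    ‖Z t‖ ≤ ‖Z 0‖ + K * max 1 T := by
  rcases ht.eq_or_lt with rfl | ht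
  · simpa using mul_nonneg hK (zero_le_one.trans (le_max_left 1 T))
  calc ‖Z t‖ ≤ ‖Z 0‖ + ‖Z t - Z 0‖ := norm_le_norm_add_norm_sub' _ _
    _ ≤ ‖Z 0‖ + K * (t - 0) ^ α 0 := by gcongr; exact hZ 0 t le_rfl ht htT
    _ ≤ ‖Z 0‖ + K * max 1 T := by
      gcongr
      exact Real.rpow_le_max_one (by linarith) (by linarith) hα0 hα1

section ControlledPath

variable {E F G : Type*} [NormedAddCommGroup E] [NormedSpace ℝ E]
  [NormedAddCommGroup F] [NormedSpace ℝ F] [NormedAddCommGroup G] [NormedSpace ℝ G]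
  {T : ℝ} {α : ℝ → ℝ} {X : ℝ → E} {Y : ℝ → F} {Y' : ℝ → E →L[ℝ] F} {R : ℝ → ℝ → F}
  {A B KX KY : ℝ} {s t : ℝ}

theorem norm_sub_le_of_controlled (hα : ∀ s ∈ Set.Icc 0 T, 0 ≤ α s ∧ α s ≤ 1)
    (hctrl : Y t - Y s = Y' s (X t - X s) + R s t) (hY' : ‖Y' s‖ ≤ B)
    (hX : ‖X t - X s‖ ≤ KX * (t - s) ^ α s) (hR : ‖R s t‖ ≤ KY * (t - s) ^ (2 * α s))
    (hKY : 0 ≤ KY) (hs : 0 ≤ s) (hst : s < t) (htT : t ≤ T) :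
    ‖Y t - Y s‖ ≤ (B * KX + KY * max 1 T) * (t - s) ^ α s := by
  have hαs := hα s ⟨hs, by linarith⟩
  have hscale : (t - s) ^ α s ≤ max 1 T :=
    Real.rpow_le_max_one (by linarith) (by linarith) hαs.1 hαs.2
  have hB : 0 ≤ B := (norm_nonneg _).trans hY'
  rw [Real.rpow_two_mul_eq_sq (by linarith)] at hR
  calc ‖Y t - Y s‖ ≤ ‖Y' s‖ * ‖X t - X s‖ + ‖R s t‖ :=
        hctrl ▸ (norm_add_le _ _).trans (add_le_add_left (le_opNorm _ _) _)
    _ ≤ B * (KX * (t - s) ^ α s) + KY * (max 1 T * (t - s) ^ α s) := by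
      gcongr
      exact hR.trans (by rw [sq]; gcongr)
    _ = (B * KX + KY * max 1 T) * (t - s) ^ α s := by ring

variable {f : F → G} {Kf : ℝ}

theorem norm_sub_sub_fderiv_comp_le_of_controlled
    (htaylor : ‖f (Y t) - f (Y s) - fderiv ℝ f (Y s) (Y t - Y s)‖ ≤ Kf * ‖Y t - Y s‖ ^ 2)
    (hDf : ‖fderiv ℝ f (Y s)‖ ≤ Kf) (hctrl : Y t - Y s = Y' s (X t - X s) + R s t)
    (hY : ‖Y t - Y s‖ ≤ A * (t - s) ^ α s) (hR : ‖R s t‖ ≤ KY * (t - s) ^ (2 * α s))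
    (hst : s < t) :
    ‖f (Y t) - f (Y s) - (fderiv ℝ f (Y s) ∘L Y' s) (X t - X s)‖
      ≤ Kf * (A ^ 2 + KY) * (t - s) ^ (2 * α s) := by
  have hKf : 0 ≤ Kf := (norm_nonneg _).trans hDf
  have hsplit : f (Y t) - f (Y s) - (fderiv ℝ f (Y s) ∘L Y' s) (X t - X s)
      = (f (Y t) - f (Y s) - fderiv ℝ f (Y s) (Y t - Y s)) + fderiv ℝ f (Y s) (R s t) := by
    rw [hctrl, map_add, comp_apply]
    abel
  rw [Real.rpow_two_mul_eq_sq (by linarith)] at hR ⊢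
  calc _ ≤ Kf * ‖Y t - Y s‖ ^ 2 + ‖fderiv ℝ f (Y s)‖ * ‖R s t‖ :=
        hsplit ▸ (norm_add_le _ _).trans (add_le_add htaylor (le_opNorm _ _))
    _ ≤ Kf * (A * (t - s) ^ α s) ^ 2 + Kf * (KY * ((t - s) ^ α s) ^ 2) := by gcongr
    _ = Kf * (A ^ 2 + KY) * ((t - s) ^ α s) ^ 2 := by ring

theorem norm_fderiv_comp_sub_fderiv_comp_le_of_controlled
    (hDlip : ‖fderiv ℝ f (Y t) - fderiv ℝ f (Y s)‖ ≤ Kf * ‖Y t - Y s‖)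
    (hDf : ‖fderiv ℝ f (Y s)‖ ≤ Kf) (hY : ‖Y t - Y s‖ ≤ A * (t - s) ^ α s)
    (hY't : ‖Y' t‖ ≤ B) (hY' : ‖Y' t - Y' s‖ ≤ KY * (t - s) ^ α s) :
    ‖fderiv ℝ f (Y t) ∘L Y' t - fderiv ℝ f (Y s) ∘L Y' s‖
      ≤ Kf * (A * B + KY) * (t - s) ^ α s := by
  have hKf : 0 ≤ Kf := (norm_nonneg _).trans hDf
  have hAh : 0 ≤ A * (t - s) ^ α s := (norm_nonneg _).trans hY
  calc _ ≤ Kf * ‖Y t - Y s‖ * ‖Y' t‖ + ‖fderiv ℝ f (Y s)‖ * ‖Y' t - Y' s‖ :=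
        (norm_comp_sub_comp_le _ _ _ _).trans (by gcongr)
    _ ≤ Kf * (A * (t - s) ^ α s) * B + Kf * (KY * (t - s) ^ α s) := by gcongr
    _ = Kf * (A * B + KY) * (t - s) ^ α s := by ring

end ControlledPath

theorem exists_pos_le_mul_of_eq_zero {N B : ℝ} (hB : 0 ≤ B) (hN : B = 0 → N ≤ 0) :
    ∃ C > (0 : ℝ), N ≤ C * B := by
  rcases hB.eq_or_lt with hB0 | hB0
  · exact ⟨1, one_pos, by simpa [← hB0] using hN hB0.symm⟩
  · refine ⟨(|N| + 1) / B, by positivity, ?_⟩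
    rw [div_mul_cancel₀ _ hB0.ne']
    linarith [le_abs_self N]

theorem stmt14_general {d n : ℕ} (T : ℝ)
    (α : ℝ → ℝ) (hα : ∀ t ∈ Set.Icc (0:ℝ) T, 1/3 < α t ∧ α t < 1)
    (X : ℝ → EuclideanSpace ℝ (Fin d))
    (KX : ℝ)
    (hX : ∀ s t : ℝ, 0 ≤ s → s < t → t ≤ T → ‖X t - X s‖ ≤ KX * (t - s) ^ α s)
    (f : EuclideanSpace ℝ (Fin n) → EuclideanSpace ℝ (Fin n))
    (Kf : ℝ) (hf : ContDiff ℝ 2 f)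
    (hfb : ∀ x, ‖f x‖ ≤ Kf ∧ ‖fderiv ℝ f x‖ ≤ Kf ∧ ‖iteratedFDeriv ℝ 2 f x‖ ≤ Kf)
    (Y : ℝ → EuclideanSpace ℝ (Fin n))
    (Y' : ℝ → (EuclideanSpace ℝ (Fin d) →L[ℝ] EuclideanSpace ℝ (Fin n)))
    (R : ℝ → ℝ → EuclideanSpace ℝ (Fin n))
    (hctrl : ∀ s t : ℝ, 0 ≤ s → s ≤ t → t ≤ T →
      Y t - Y s = Y' s (X t - X s) + R s t)
    (KY : ℝ) (hKY : 0 ≤ KY)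
    (hY' : ∀ s t : ℝ, 0 ≤ s → s < t → t ≤ T → ‖Y' t - Y' s‖ ≤ KY * (t - s) ^ α s)
    (hR : ∀ s t : ℝ, 0 ≤ s → s < t → t ≤ T → ‖R s t‖ ≤ KY * (t - s) ^ (2 * α s)) :
    ∃ C > (0:ℝ), ∃ Rf : ℝ → ℝ → EuclideanSpace ℝ (Fin n),
      (∀ s t : ℝ, 0 ≤ s → s ≤ t → t ≤ T →
        f (Y t) - f (Y s) = ((fderiv ℝ f (Y s)).comp (Y' s)) (X t - X s) + Rf s t) ∧
      (∀ s t : ℝ, 0 ≤ s → s < t → t ≤ T →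
        ‖Rf s t‖ ≤ C * (‖Y 0‖ + ‖Y' 0‖ + KY) * (t - s) ^ (2 * α s)) ∧
      (∀ s t : ℝ, 0 ≤ s → s < t → t ≤ T →
        ‖(fderiv ℝ f (Y t)).comp (Y' t) - (fderiv ℝ f (Y s)).comp (Y' s)‖ ≤
          C * (‖Y 0‖ + ‖Y' 0‖ + KY) * (t - s) ^ α s) := by
  have hα' : ∀ s ∈ Set.Icc 0 T, 0 ≤ α s ∧ α s ≤ 1 := fun s hs =>
    ⟨by linarith [(hα s hs).1], (hα s hs).2.le⟩
  have hDf x : ‖fderiv ℝ f x‖ ≤ Kf := (hfb x).2.1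
  have hDlip := norm_fderiv_sub_le_of_norm_iteratedFDeriv_two_le hf fun x => (hfb x).2.2
  have htaylor := norm_sub_sub_fderiv_apply_le (hf.differentiable two_ne_zero)
    ((norm_nonneg _).trans (hDf 0)) hDlip
  set B := ‖Y' 0‖ + KY * max 1 T
  set A := B * KX + KY * max 1 T
  have hY'B t (ht : 0 ≤ t) (htT : t ≤ T) : ‖Y' t‖ ≤ B :=
    have hα0 := hα' 0 ⟨le_rfl, ht.trans htT⟩
    norm_le_norm_zero_add_of_varHolder hKY hY' hα0.1 hα0.2 ht htT
  have hYA s t (hs : 0 ≤ s) (hst : s < t) (htT : t ≤ T) : ‖Y t - Y s‖ ≤ A * (t - s) ^ α s :=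
    norm_sub_le_of_controlled hα' (hctrl s t hs hst.le htT) (hY'B s hs (by linarith))
      (hX s t hs hst htT) (hR s t hs hst htT) hKY hs hst htT
  obtain ⟨C, hC, hN⟩ := exists_pos_le_mul_of_eq_zero
    (N := max (Kf * (A ^ 2 + KY)) (Kf * (A * B + KY))) (B := ‖Y 0‖ + ‖Y' 0‖ + KY)
    (by positivity) fun h0 => by
      have hY'0 : ‖Y' 0‖ = 0 := by linarith [norm_nonneg (Y 0), norm_nonneg (Y' 0)]
      have hKY0 : KY = 0 := by linarith [norm_nonneg (Y 0), norm_nonneg (Y' 0)]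
      simp [A, B, hY'0, hKY0]
  refine ⟨C, hC, fun s t => f (Y t) - f (Y s) - ((fderiv ℝ f (Y s)).comp (Y' s)) (X t - X s),
    fun s t _ _ _ => (add_sub_cancel _ _).symm, fun s t hs hst htT => ?_, fun s t hs hst htT => ?_⟩
  · refine (norm_sub_sub_fderiv_comp_le_of_controlled (htaylor _ _) (hDf _)
      (hctrl s t hs hst.le htT) (hYA s t hs hst htT) (hR s t hs hst htT) hst).trans ?_
    exact mul_le_mul_of_nonneg_right ((le_max_left _ _).trans hN) (by positivity)
  · refine (norm_fderiv_comp_sub_fderiv_comp_le_of_controlled (hDlip _ _) (hDf _)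
      (hYA s t hs hst htT) (hY'B t (by linarith) htT) (hY' s t hs hst htT)).trans ?_
    exact mul_le_mul_of_nonneg_right ((le_max_right _ _).trans hN) (by positivity)

/-- Stability of variable order controlled paths under `C²_b` functions:
`(f(Y), Df(Y)Y′)` is again controlled by `X`, with semi-norm bounded by
`C (|Y₀| + |Y′₀| + ‖Y,Y′‖_{X,α(·)})`. -/
theorem stmt14 {d n : ℕ} (T : ℝ) (hT : 0 < T)
    (α : ℝ → ℝ) (hα : ∀ t ∈ Set.Icc (0:ℝ) T, 1/3 < α t ∧ α t < 1)
    (X : ℝ → EuclideanSpace ℝ (Fin d))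
    (KX : ℝ) (hKX : 0 ≤ KX)
    (hX : ∀ s t : ℝ, 0 ≤ s → s < t → t ≤ T → ‖X t - X s‖ ≤ KX * (t - s) ^ α s)
    (f : EuclideanSpace ℝ (Fin n) → EuclideanSpace ℝ (Fin n))
    (Kf : ℝ) (hf : ContDiff ℝ 2 f)
    (hfb : ∀ x, ‖f x‖ ≤ Kf ∧ ‖fderiv ℝ f x‖ ≤ Kf ∧ ‖iteratedFDeriv ℝ 2 f x‖ ≤ Kf)
    (Y : ℝ → EuclideanSpace ℝ (Fin n))
    (Y' : ℝ → (EuclideanSpace ℝ (Fin d) →L[ℝ] EuclideanSpace ℝ (Fin n)))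
    (R : ℝ → ℝ → EuclideanSpace ℝ (Fin n))
    (hctrl : ∀ s t : ℝ, 0 ≤ s → s ≤ t → t ≤ T →
      Y t - Y s = Y' s (X t - X s) + R s t)
    (KY : ℝ) (hKY : 0 ≤ KY)
    (hY' : ∀ s t : ℝ, 0 ≤ s → s < t → t ≤ T → ‖Y' t - Y' s‖ ≤ KY * (t - s) ^ α s)
    (hR : ∀ s t : ℝ, 0 ≤ s → s < t → t ≤ T → ‖R s t‖ ≤ KY * (t - s) ^ (2 * α s)) :
    ∃ C > (0:ℝ), ∃ Rf : ℝ → ℝ → EuclideanSpace ℝ (Fin n),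
      (∀ s t : ℝ, 0 ≤ s → s ≤ t → t ≤ T →
        f (Y t) - f (Y s) = ((fderiv ℝ f (Y s)).comp (Y' s)) (X t - X s) + Rf s t) ∧
      (∀ s t : ℝ, 0 ≤ s → s < t → t ≤ T →
        ‖Rf s t‖ ≤ C * (‖Y 0‖ + ‖Y' 0‖ + KY) * (t - s) ^ (2 * α s)) ∧
      (∀ s t : ℝ, 0 ≤ s → s < t → t ≤ T →
        ‖(fderiv ℝ f (Y t)).comp (Y' t) - (fderiv ℝ f (Y s)).comp (Y' s)‖ ≤
          C * (‖Y 0‖ + ‖Y' 0‖ + KY) * (t - s) ^ α s) :=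
  stmt14_general T α hα X KX hX f Kf hf hfb Y Y' R hctrl KY hKY hY' hR
end

section
/- (Variable order Garsia–Rodemich–Rumsey / Besov embedding) Let f : [0,T] → ℝ be continuous, p ≥ 1, and γ : [0,T] → (1/p, 1] measurable with sup_{t,s} |t−s|^{γ(t)−γ(s)} ≤ C. Set α(t) = γ(t) − 1/p. If the double integral ∫₀^T ∫₀^T |f(x) − f(y)|^p / |x−y|^{1 + max(γ(x),γ(y)) p} dx dy is finite, then f ∈ C^{α(·)}([0,T]) and sup_{t≠s} |f(t) − f(s)|/|t−s|^{max(α(t),α(s))} ≤ C_{T,α} (∫₀^T ∫₀^T |f(x)−f(y)|^p / |x−y|^{1+max(γ(x),γ(y))p} dx dy)^{1/p}. -/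
/-!
For nested intervals `J ⊆ J'` containing `u`, Jensen's inequality on `J × J'` bounds
`|⨍_J f - ⨍_J' f| ^ p` by the Gagliardo double integral times
`|J'| ^ (1 + γ u * p) / (|J| |J'|)`; the bound on `|t - s| ^ (γ t - γ s)` is what allows replacing
the exponent `max (γ x) (γ y)` of a pair in `J'` by `γ u`. Along the dyadic intervals of length
`|t - s| / 2 ^ k` shrinking to `u` these differences decay geometrically like
`(|t - s| / 2 ^ k) ^ (γ u - 1 / p)`, so by continuity of `f` the distance from `f u` to the mean
of `f` over `[s, t]` is `O(|t - s| ^ (γ u - 1 / p))` for `u = s` and `u = t`. The same bound makes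
`γ` lower semicontinuous, hence `min γ > 1 / p`, which makes the geometric ratio uniform in `u`.
-/

open MeasureTheory Set Filter Topology

section Averages

variable {α : Type*} [MeasurableSpace α]

theorem abs_average_rpow_le {μ : Measure α} [IsFiniteMeasure μ] [NeZero μ] {h : α → ℝ}
    {p : ℝ} (hp : 1 ≤ p) (hh : Integrable h μ) (hhp : Integrable (fun x ↦ |h x| ^ p) μ) :
    |⨍ x, h x ∂μ| ^ p ≤ ⨍ x, |h x| ^ p ∂μ := by
  have habs : |⨍ x, h x ∂μ| ≤ ⨍ x, |h x| ∂μ := by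
    simpa only [average_eq, smul_eq_mul, abs_mul, abs_inv, abs_of_nonneg measureReal_nonneg]
      using mul_le_mul_of_nonneg_left (abs_integral_le_integral_abs (μ := μ) (f := h))
        (inv_nonneg.2 (measureReal_nonneg (μ := μ) (s := univ)))
  calc |⨍ x, h x ∂μ| ^ p ≤ (⨍ x, |h x| ∂μ) ^ p :=
        Real.rpow_le_rpow (abs_nonneg _) habs (by linarith)
    _ ≤ ⨍ x, |h x| ^ p ∂μ :=
        (convexOn_rpow hp).map_average_le (Real.continuous_rpow_const (by linarith)).continuousOn
          isClosed_Ici (.of_forall fun x ↦ abs_nonneg (h x)) hh.abs hhp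

theorem average_sub_average_eq_average_prod {μ ν : Measure α} [IsFiniteMeasure μ] [NeZero μ]
    [IsFiniteMeasure ν] [NeZero ν] {f : α → ℝ} (hμ : Integrable f μ) (hν : Integrable f ν) :
    ⨍ x, f x ∂μ - ⨍ y, f y ∂ν = ⨍ z, (f z.1 - f z.2) ∂μ.prod ν := by
  have hμ0 : μ.real univ ≠ 0 := by simp [measureReal_def, ENNReal.toReal_eq_zero_iff, NeZero.ne]
  have hν0 : ν.real univ ≠ 0 := by simp [measureReal_def, ENNReal.toReal_eq_zero_iff, NeZero.ne]
  rw [average_eq, average_eq, average_eq, integral_sub (hμ.comp_fst ν) (hν.comp_snd μ),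
    integral_fun_fst, integral_fun_snd, ← univ_prod_univ, measureReal_prod_prod]
  simp only [smul_eq_mul]
  field_simp

theorem abs_average_sub_average_rpow_le {μ ν : Measure α} [IsFiniteMeasure μ] [NeZero μ]
    [IsFiniteMeasure ν] [NeZero ν] {f : α → ℝ} {p : ℝ} (hp : 1 ≤ p)
    (hμ : Integrable f μ) (hν : Integrable f ν)
    (hfp : Integrable (fun z : α × α ↦ |f z.1 - f z.2| ^ p) (μ.prod ν)) :
    |⨍ x, f x ∂μ - ⨍ y, f y ∂ν| ^ p ≤ ⨍ z, |f z.1 - f z.2| ^ p ∂μ.prod ν := by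
  have : NeZero (μ.prod ν) := ⟨fun h ↦ by
    simpa [← univ_prod_univ, Measure.prod_prod, NeZero.ne] using congrArg (· univ) h⟩
  rw [average_sub_average_eq_average_prod hμ hν]
  exact abs_average_rpow_le hp ((hμ.comp_fst ν).sub (hν.comp_snd μ)) hfp

end Averages

def dyadicIcc (u θ R : ℝ) (k : ℕ) : Set ℝ :=
  Icc (u - θ * R / 2 ^ k) (u + (1 - θ) * R / 2 ^ k)

section Dyadic

variable {u θ R : ℝ}

theorem dyadicIcc_zero : dyadicIcc u θ R 0 = Icc (u - θ * R) (u + (1 - θ) * R) := by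
  simp [dyadicIcc]

theorem dyadicIcc_length (u θ R : ℝ) (k : ℕ) :
    u + (1 - θ) * R / 2 ^ k - (u - θ * R / 2 ^ k) = R / 2 ^ k := by
  ring

theorem mem_dyadicIcc (hθ : θ ∈ Icc (0 : ℝ) 1) (hR : 0 ≤ R) (k : ℕ) :
    u ∈ dyadicIcc u θ R k := by
  have : 0 ≤ θ * R / 2 ^ k := by have := hθ.1; positivity
  have : 0 ≤ (1 - θ) * R / 2 ^ k := by have := sub_nonneg.2 hθ.2; positivity
  exact ⟨by linarith, by linarith⟩

theorem dyadicIcc_succ_subset (hθ : θ ∈ Icc (0 : ℝ) 1) (hR : 0 ≤ R) (k : ℕ) :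
    dyadicIcc u θ R (k + 1) ⊆ dyadicIcc u θ R k := by
  have h2 : R / 2 ^ (k + 1) ≤ R / 2 ^ k :=
    div_le_div_of_nonneg_left hR (by positivity) (pow_le_pow_right₀ one_le_two k.le_succ)
  simp only [dyadicIcc, mul_div_assoc]
  exact Icc_subset_Icc (by nlinarith [hθ.1]) (by nlinarith [hθ.2])

theorem dyadicIcc_subset_zero (hθ : θ ∈ Icc (0 : ℝ) 1) (hR : 0 ≤ R) (k : ℕ) :
    dyadicIcc u θ R k ⊆ dyadicIcc u θ R 0 :=
  antitone_nat_of_succ_le (dyadicIcc_succ_subset hθ hR) k.zero_le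

theorem tendsto_setAverage_dyadicIcc {f : ℝ → ℝ} (hθ : θ ∈ Icc (0 : ℝ) 1) (hR : 0 < R)
    (hf : ContinuousOn f (dyadicIcc u θ R 0)) :
    Tendsto (fun k ↦ ⨍ x in dyadicIcc u θ R k, f x) atTop (𝓝 (f u)) := by
  refine Metric.tendsto_nhds.2 fun ε hε ↦ ?_
  obtain ⟨δ, hδ, hfδ⟩ := Metric.continuousWithinAt_iff.1
    (hf u (mem_dyadicIcc hθ hR.le 0)) (ε / 2) (half_pos hε)
  have hsmall : ∀ᶠ k : ℕ in atTop, R / 2 ^ k < δ :=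
    (tendsto_const_nhds.div_atTop
      (tendsto_pow_atTop_atTop_of_one_lt one_lt_two)).eventually_lt_const hδ
  filter_upwards [hsmall] with k hk
  have hlen : volume (dyadicIcc u θ R k) = ENNReal.ofReal (R / 2 ^ k) := by
    rw [dyadicIcc, Real.volume_Icc, dyadicIcc_length]
  have hball : ⨍ x in dyadicIcc u θ R k, f x ∈ Metric.closedBall (f u) (ε / 2) := by
    refine (convex_closedBall _ _).set_average_mem Metric.isClosed_closedBall
      (by rw [hlen]; simp; positivity) (by simp [hlen])
      (ae_restrict_of_forall_mem measurableSet_Icc fun x hx ↦ ?_)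
      ((hf.mono (dyadicIcc_subset_zero hθ hR.le k)).integrableOn_compact isCompact_Icc)
    have hxu : dist x u < δ :=
      (Real.dist_le_of_mem_Icc hx (mem_dyadicIcc hθ hR.le k)).trans_lt
        (by rwa [dyadicIcc_length])
    exact (hfδ (dyadicIcc_subset_zero hθ hR.le k hx) hxu).le
  exact (Metric.mem_closedBall.1 hball).trans_lt (half_lt_self hε)

theorem abs_sub_setAverage_dyadicIcc_le {f : ℝ → ℝ} {A α : ℝ} (hθ : θ ∈ Icc (0 : ℝ) 1)
    (hR : 0 < R) (hα : 0 < α) (hf : ContinuousOn f (dyadicIcc u θ R 0))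
    (hstep : ∀ k : ℕ,
      |(⨍ x in dyadicIcc u θ R (k + 1), f x) - ⨍ x in dyadicIcc u θ R k, f x| ≤
        A * (R / 2 ^ k) ^ α) :
    |f u - ⨍ x in dyadicIcc u θ R 0, f x| ≤ A * R ^ α / (1 - 2 ^ (-α)) := by
  have hr : (2 : ℝ) ^ (-α) < 1 := Real.rpow_lt_one_of_one_lt_of_neg one_lt_two (neg_lt_zero.2 hα)
  rw [abs_sub_comm, ← Real.dist_eq]
  refine dist_le_of_le_geometric_of_tendsto₀ _ _ hr (fun k ↦ ?_)
    (tendsto_setAverage_dyadicIcc hθ hR hf)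
  rw [dist_comm, Real.dist_eq, mul_assoc, Real.rpow_neg zero_le_two, inv_pow,
    Real.rpow_pow_comm zero_le_two, ← div_eq_mul_inv, ← Real.div_rpow hR.le (by positivity)]
  exact hstep k

end Dyadic

/-- If `γ x' ≤ γ x - ε` at points `x'` close to `x`, then `|x' - x| ^ (γ x' - γ x)` would be
unbounded. -/
theorem lowerSemicontinuousOn_of_abs_sub_rpow_le {S : Set ℝ} {γ : ℝ → ℝ} {C : ℝ}
    (h : ∀ t ∈ S, ∀ s ∈ S, s ≠ t → |t - s| ^ (γ t - γ s) ≤ C) :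
    LowerSemicontinuousOn γ S := by
  intro x hx y hy
  have hdist : Tendsto (fun x' ↦ |x' - x|) (𝓝[≠] x) (𝓝[>] 0) := by
    refine tendsto_nhdsWithin_iff.2 ⟨?_, eventually_nhdsWithin_of_forall fun x' hx' ↦ ?_⟩
    · have := ((continuous_sub_right x).abs.tendsto x).mono_left
        (nhdsWithin_le_nhds (s := {x}ᶜ))
      rwa [sub_self, abs_zero] at this
    · exact abs_pos.2 (sub_ne_zero.2 hx')
  have hbig : ∀ᶠ d in 𝓝[>] (0 : ℝ), d < 1 ∧ C < d ^ (y - γ x) :=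
    (eventually_of_mem (Ioo_mem_nhdsGT one_pos) fun d hd ↦ hd.2).and
      ((tendsto_rpow_neg_nhdsGT_zero (sub_neg.2 hy)).eventually_gt_atTop C)
  have hnear := eventually_nhdsWithin_iff.1 (hdist.eventually hbig)
  rw [eventually_nhdsWithin_iff]
  filter_upwards [hnear] with x' hx' hx'S
  rcases eq_or_ne x' x with rfl | hne
  · exact hy
  obtain ⟨hlt1, hC⟩ := hx' hne
  by_contra! hle
  have hpos : 0 < |x' - x| := abs_pos.2 (sub_ne_zero.2 hne)
  have := Real.rpow_le_rpow_of_exponent_ge hpos hlt1.le (sub_le_sub_right hle (γ x))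
  linarith [h x' hx'S x hx hne.symm]

theorem one_le_of_abs_sub_rpow_le {s t a b C : ℝ} (hst : s ≠ t)
    (h₁ : |t - s| ^ (a - b) ≤ C) (h₂ : |s - t| ^ (b - a) ≤ C) : 1 ≤ C := by
  have hpos : 0 < |t - s| := abs_pos.2 (sub_ne_zero.2 hst.symm)
  rw [abs_sub_comm, ← neg_sub a b, Real.rpow_neg hpos.le] at h₂
  have hx := Real.rpow_pos_of_pos hpos (a - b)
  by_contra! hC
  have := mul_lt_mul'' (h₁.trans_lt hC) (h₂.trans_lt hC) hx.le (inv_nonneg.2 hx.le)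
  rw [mul_inv_cancel₀ hx.ne', one_mul] at this
  exact lt_irrefl _ this

theorem rpow_le_mul_rpow_max {R a b C : ℝ} (hR : 0 < R) (hC : 1 ≤ C) (h : R ^ (a - b) ≤ C) :
    R ^ a ≤ C * R ^ max a b := by
  rcases le_total b a with hba | hab
  · rw [max_eq_left hba]
    exact le_mul_of_one_le_left (Real.rpow_nonneg hR.le _) hC
  · rw [max_eq_right hab]
    calc R ^ a = R ^ (a - b) * R ^ b := by rw [← Real.rpow_add hR, sub_add_cancel]
      _ ≤ C * R ^ b := mul_le_mul_of_nonneg_right h (Real.rpow_nonneg hR.le _)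

theorem rpow_sub_le_max_one_mul {γ : ℝ → ℝ} {z u ℓ T C : ℝ} (hzu : |z - u| ≤ ℓ) (hℓ : 0 < ℓ)
    (hℓT : ℓ ≤ T) (hγ : γ z - γ u ≤ 1) (hC : 1 ≤ C)
    (h : z ≠ u → |z - u| ^ (γ z - γ u) ≤ C) :
    ℓ ^ (γ z - γ u) ≤ max 1 T * C := by
  have hmax : 1 ≤ max 1 T := le_max_left _ _
  rcases le_or_gt 1 ℓ with h1 | h1
  · calc ℓ ^ (γ z - γ u) ≤ ℓ ^ (1 : ℝ) := Real.rpow_le_rpow_of_exponent_le h1 hγ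
      _ ≤ max 1 T := by rw [Real.rpow_one]; exact hℓT.trans (le_max_right _ _)
      _ ≤ max 1 T * C := le_mul_of_one_le_right (by linarith) hC
  rcases le_or_gt 0 (γ z - γ u) with h2 | h2
  · calc ℓ ^ (γ z - γ u) ≤ 1 := Real.rpow_le_one hℓ.le h1.le h2
      _ ≤ max 1 T * C := one_le_mul_of_one_le_of_one_le hmax hC
  have hne : z ≠ u := by rintro rfl; simp at h2
  calc ℓ ^ (γ z - γ u) ≤ |z - u| ^ (γ z - γ u) :=
        Real.rpow_le_rpow_of_nonpos (abs_pos.2 (sub_ne_zero.2 hne)) hzu h2.le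
    _ ≤ C := h hne
    _ ≤ max 1 T * C := le_mul_of_one_le_left (by linarith) hmax

/-- `2 ^ (1 / p)` comes from halving the intervals, `1 / (1 - 2 ^ (-(m - 1 / p)))` from the
geometric series along the dyadic chain, where `m > 1 / p` bounds `γ` from below. -/
noncomputable def dyadicConstant (T p C0 m : ℝ) : ℝ :=
  max 1 T * C0 * 2 ^ (1 / p) / (1 - 2 ^ (-(m - 1 / p)))

theorem dyadicConstant_pos {T p C0 m : ℝ} (hC0 : 0 < C0) (hm : 1 / p < m) :
    0 < dyadicConstant T p C0 m := by
  have : (2 : ℝ) ^ (-(m - 1 / p)) < 1 :=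
    Real.rpow_lt_one_of_one_lt_of_neg one_lt_two (by linarith)
  have : 0 < max 1 T := zero_lt_one.trans_le (le_max_left _ _)
  have : (0 : ℝ) < 2 ^ (1 / p) := by positivity
  exact div_pos (by positivity) (by linarith)

noncomputable def gagliardoKernel (f γ : ℝ → ℝ) (p : ℝ) (q : ℝ × ℝ) : ℝ :=
  |f q.1 - f q.2| ^ p / |q.1 - q.2| ^ (1 + max (γ q.1) (γ q.2) * p)

theorem gagliardoKernel_nonneg (f γ : ℝ → ℝ) (p : ℝ) (q : ℝ × ℝ) :
    0 ≤ gagliardoKernel f γ p q :=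
  div_nonneg (Real.rpow_nonneg (abs_nonneg _) _) (Real.rpow_nonneg (abs_nonneg _) _)

theorem gagliardoKernel_mul_rpow (f γ : ℝ → ℝ) {p : ℝ} (hp : p ≠ 0) (q : ℝ × ℝ) :
    gagliardoKernel f γ p q * |q.1 - q.2| ^ (1 + max (γ q.1) (γ q.2) * p) =
      |f q.1 - f q.2| ^ p := by
  rcases eq_or_ne q.1 q.2 with h | h
  · simp [gagliardoKernel, h, Real.zero_rpow hp]
  · exact div_mul_cancel₀ _ (Real.rpow_pos_of_pos (abs_pos.2 (sub_ne_zero.2 h)) _).ne'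

theorem ContinuousOn.abs_sub_rpow {f : ℝ → ℝ} {p : ℝ} {s : Set ℝ} (hf : ContinuousOn f s)
    (hp : 0 ≤ p) : ContinuousOn (fun z : ℝ × ℝ ↦ |f z.1 - f z.2| ^ p) (s ×ˢ s) :=
  ((hf.comp continuousOn_fst fun _ hz ↦ hz.1).sub
    (hf.comp continuousOn_snd fun _ hz ↦ hz.2)).abs.rpow_const fun _ _ ↦ Or.inr hp

section Kernel

variable {f γ : ℝ → ℝ} {T p C0 : ℝ}

theorem abs_sub_rpow_le_of_mem_Icc (hp : 0 < p) (hC0 : 1 ≤ C0)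
    (hγ : ∀ t ∈ Icc 0 T, γ t ∈ Icc 0 1)
    (hA : ∀ t ∈ Icc 0 T, ∀ s ∈ Icc 0 T, s ≠ t → |t - s| ^ (γ t - γ s) ≤ C0)
    {a b u x y : ℝ} (hab : a < b) (hJ : Icc a b ⊆ Icc 0 T) (hu : u ∈ Icc a b)
    (hx : x ∈ Icc a b) (hy : y ∈ Icc a b) :
    |x - y| ^ (1 + max (γ x) (γ y) * p) ≤ (max 1 T * C0) ^ p * (b - a) ^ (1 + γ u * p) := by
  have hℓ : 0 < b - a := sub_pos.2 hab
  have hbT : b - a ≤ T := by linarith [(hJ ⟨hab.le, le_rfl⟩).2, (hJ ⟨le_rfl, hab.le⟩).1]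
  have hexp : (b - a) ^ (max (γ x) (γ y) - γ u) ≤ max 1 T * C0 := by
    obtain ⟨z, hz, hzmax⟩ : ∃ z ∈ Icc a b, γ z = max (γ x) (γ y) := by
      rcases max_choice (γ x) (γ y) with h | h
      exacts [⟨x, hx, h.symm⟩, ⟨y, hy, h.symm⟩]
    rw [← hzmax]
    exact rpow_sub_le_max_one_mul (Real.dist_le_of_mem_Icc hz hu) hℓ hbT
      (by linarith [(hγ z (hJ hz)).2, (hγ u (hJ hu)).1]) hC0 (hA z (hJ hz) u (hJ hu) ·.symm)
  have h0 : 0 ≤ 1 + max (γ x) (γ y) * p := by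
    nlinarith [(hγ x (hJ hx)).1, le_max_left (γ x) (γ y)]
  calc |x - y| ^ (1 + max (γ x) (γ y) * p) ≤ (b - a) ^ (1 + max (γ x) (γ y) * p) :=
        Real.rpow_le_rpow (abs_nonneg _) (Real.dist_le_of_mem_Icc hx hy) h0
    _ = ((b - a) ^ (max (γ x) (γ y) - γ u)) ^ p * (b - a) ^ (1 + γ u * p) := by
        rw [← Real.rpow_mul hℓ.le, ← Real.rpow_add hℓ]; ring_nf
    _ ≤ (max 1 T * C0) ^ p * (b - a) ^ (1 + γ u * p) := by gcongr

theorem setIntegral_abs_sub_rpow_le (hp : 0 < p) (hC0 : 1 ≤ C0)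
    (hγ : ∀ t ∈ Icc 0 T, γ t ∈ Icc 0 1)
    (hA : ∀ t ∈ Icc 0 T, ∀ s ∈ Icc 0 T, s ≠ t → |t - s| ^ (γ t - γ s) ≤ C0)
    (hf : ContinuousOn f (Icc 0 T))
    (hInt : IntegrableOn (gagliardoKernel f γ p) (Icc 0 T ×ˢ Icc 0 T))
    {a b c d u : ℝ} (hab : a < b) (hJ : Icc a b ⊆ Icc 0 T) (hJJ : Icc c d ⊆ Icc a b)
    (hu : u ∈ Icc a b) :
    ∫ z in Icc c d ×ˢ Icc a b, |f z.1 - f z.2| ^ p ≤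
      (max 1 T * C0) ^ p * (b - a) ^ (1 + γ u * p) *
        ∫ q in Icc 0 T ×ˢ Icc 0 T, gagliardoKernel f γ p q := by
  set W := (max 1 T * C0) ^ p * (b - a) ^ (1 + γ u * p)
  have hS : Icc c d ×ˢ Icc a b ⊆ Icc 0 T ×ˢ Icc 0 T := prod_mono (hJJ.trans hJ) hJ
  calc ∫ z in Icc c d ×ˢ Icc a b, |f z.1 - f z.2| ^ p
      ≤ ∫ z in Icc c d ×ˢ Icc a b, gagliardoKernel f γ p z * W := by
        refine setIntegral_mono_on (((hf.abs_sub_rpow hp.le).mono hS).integrableOn_compact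
          (isCompact_Icc.prod isCompact_Icc)) ((hInt.mono_set hS).mul_const W)
          (measurableSet_Icc.prod measurableSet_Icc) fun z hz ↦ ?_
        rw [← gagliardoKernel_mul_rpow f γ hp.ne' z]
        exact mul_le_mul_of_nonneg_left (abs_sub_rpow_le_of_mem_Icc hp hC0 hγ hA hab hJ hu
          (hJJ hz.1) hz.2) (gagliardoKernel_nonneg f γ p z)
    _ = W * ∫ z in Icc c d ×ˢ Icc a b, gagliardoKernel f γ p z := by
        rw [integral_mul_const, mul_comm]
    _ ≤ W * ∫ q in Icc 0 T ×ˢ Icc 0 T, gagliardoKernel f γ p q :=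
        mul_le_mul_of_nonneg_left (setIntegral_mono_set hInt
          (.of_forall (gagliardoKernel_nonneg f γ p)) hS.eventuallyLE) (by positivity)

theorem abs_setAverage_sub_setAverage_rpow_le (hp : 1 ≤ p) (hC0 : 1 ≤ C0)
    (hγ : ∀ t ∈ Icc 0 T, γ t ∈ Icc 0 1)
    (hA : ∀ t ∈ Icc 0 T, ∀ s ∈ Icc 0 T, s ≠ t → |t - s| ^ (γ t - γ s) ≤ C0)
    (hf : ContinuousOn f (Icc 0 T))
    (hInt : IntegrableOn (gagliardoKernel f γ p) (Icc 0 T ×ˢ Icc 0 T))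
    {a b c d u : ℝ} (hcd : c < d) (hJ : Icc a b ⊆ Icc 0 T) (hJJ : Icc c d ⊆ Icc a b)
    (hu : u ∈ Icc a b) :
    |(⨍ x in Icc c d, f x) - ⨍ x in Icc a b, f x| ^ p ≤
      (max 1 T * C0) ^ p * (b - a) ^ (1 + γ u * p) *
        (∫ q in Icc 0 T ×ˢ Icc 0 T, gagliardoKernel f γ p q) / ((d - c) * (b - a)) := by
  have hab : a < b := ((hJJ ⟨le_rfl, hcd.le⟩).1.trans_lt hcd).trans_le (hJJ ⟨hcd.le, le_rfl⟩).2
  have : NeZero (volume.restrict (Icc c d)) := ⟨by simp [hcd]⟩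
  have : NeZero (volume.restrict (Icc a b)) := ⟨by simp [hab]⟩
  have hint : ∀ {a' b'}, Icc a' b' ⊆ Icc 0 T → IntegrableOn f (Icc a' b') :=
    fun h ↦ (hf.mono h).integrableOn_compact isCompact_Icc
  have hprod := abs_average_sub_average_rpow_le hp (hint (hJJ.trans hJ)) (hint hJ) ?_
  · rw [Measure.prod_restrict, setAverage_eq (μ := (volume : Measure ℝ).prod volume),
      measureReal_prod_prod, Real.volume_real_Icc_of_le hcd.le,
      Real.volume_real_Icc_of_le hab.le, smul_eq_mul, inv_mul_eq_div] at hprod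
    exact hprod.trans (div_le_div_of_nonneg_right
      (setIntegral_abs_sub_rpow_le (by linarith) hC0 hγ hA hf hInt hab hJ hJJ hu) (by nlinarith))
  · rw [Measure.prod_restrict]
    exact ((hf.abs_sub_rpow (by linarith)).mono (prod_mono (hJJ.trans hJ) hJ)).integrableOn_compact
      (isCompact_Icc.prod isCompact_Icc)

theorem abs_setAverage_dyadicIcc_succ_sub_le (hp : 1 ≤ p) (hC0 : 1 ≤ C0)
    (hγ : ∀ t ∈ Icc 0 T, γ t ∈ Icc 0 1)
    (hA : ∀ t ∈ Icc 0 T, ∀ s ∈ Icc 0 T, s ≠ t → |t - s| ^ (γ t - γ s) ≤ C0)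
    (hf : ContinuousOn f (Icc 0 T))
    (hInt : IntegrableOn (gagliardoKernel f γ p) (Icc 0 T ×ˢ Icc 0 T))
    {u θ R : ℝ} (hθ : θ ∈ Icc (0 : ℝ) 1) (hR : 0 < R) (hsub : dyadicIcc u θ R 0 ⊆ Icc 0 T)
    (k : ℕ) :
    |(⨍ x in dyadicIcc u θ R (k + 1), f x) - ⨍ x in dyadicIcc u θ R k, f x| ≤
      max 1 T * C0 * 2 ^ (1 / p) *
        (∫ q in Icc 0 T ×ˢ Icc 0 T, gagliardoKernel f γ p q) ^ (1 / p) *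
          (R / 2 ^ k) ^ (γ u - 1 / p) := by
  have hp0 : 0 < p := by linarith
  have hhalf : R / 2 ^ (k + 1) = R / 2 ^ k / 2 := by rw [pow_succ, div_mul_eq_div_div]
  have hstep := abs_setAverage_sub_setAverage_rpow_le hp hC0 hγ hA hf hInt
    (by linarith [dyadicIcc_length u θ R (k + 1), hhalf, show 0 < R / 2 ^ k by positivity])
    ((dyadicIcc_subset_zero hθ hR.le k).trans hsub)
    (dyadicIcc_succ_subset hθ hR.le k) (mem_dyadicIcc hθ hR.le k)
  rw [dyadicIcc_length, dyadicIcc_length, hhalf] at hstep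
  set I := ∫ q in Icc 0 T ×ˢ Icc 0 T, gagliardoKernel f γ p q
  set r := R / 2 ^ k
  set M := max 1 T * C0
  have hr : 0 < r := by positivity
  have hI : 0 ≤ I := integral_nonneg (gagliardoKernel_nonneg f γ p)
  have hM : 0 ≤ M := mul_nonneg (zero_le_one.trans (le_max_left _ _)) (by linarith)
  have hroot : ∀ x : ℝ, 0 ≤ x → (x ^ (1 / p)) ^ p = x := fun x hx ↦ by
    rw [← Real.rpow_mul hx, one_div_mul_cancel hp0.ne', Real.rpow_one]
  have hrhs : (M * 2 ^ (1 / p) * I ^ (1 / p) * r ^ (γ u - 1 / p)) ^ p =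
      M ^ p * 2 * I * (r ^ (γ u - 1 / p)) ^ p := by
    rw [Real.mul_rpow (by positivity) (by positivity),
      Real.mul_rpow (by positivity) (by positivity), Real.mul_rpow hM (by positivity),
      hroot 2 zero_le_two, hroot I hI]
  have hr1 : r ^ (1 + γ u * p) = (r ^ (γ u - 1 / p)) ^ p * r ^ (2 : ℕ) := by
    rw [← Real.rpow_mul hr.le, ← Real.rpow_natCast, ← Real.rpow_add hr]
    congr 1
    field_simp
    push_cast
    ring
  refine (Real.rpow_le_rpow_iff (abs_nonneg _) (by positivity) hp0).1 (hstep.trans_eq ?_)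
  rw [hrhs, hr1]
  field_simp

theorem abs_sub_setAverage_dyadicIcc_zero_le (hp : 1 ≤ p) (hC0 : 1 ≤ C0)
    (hγ : ∀ t ∈ Icc 0 T, γ t ∈ Icc 0 1)
    (hA : ∀ t ∈ Icc 0 T, ∀ s ∈ Icc 0 T, s ≠ t → |t - s| ^ (γ t - γ s) ≤ C0)
    (hf : ContinuousOn f (Icc 0 T))
    (hInt : IntegrableOn (gagliardoKernel f γ p) (Icc 0 T ×ˢ Icc 0 T))
    {m u θ R : ℝ} (hm : 1 / p < m) (hmu : m ≤ γ u) (hθ : θ ∈ Icc (0 : ℝ) 1) (hR : 0 < R)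
    (hsub : dyadicIcc u θ R 0 ⊆ Icc 0 T) :
    |f u - ⨍ x in dyadicIcc u θ R 0, f x| ≤
      dyadicConstant T p C0 m * (∫ q in Icc 0 T ×ˢ Icc 0 T, gagliardoKernel f γ p q) ^ (1 / p) *
        R ^ (γ u - 1 / p) := by
  set I := ∫ q in Icc 0 T ×ˢ Icc 0 T, gagliardoKernel f γ p q
  have hI : 0 ≤ I := integral_nonneg (gagliardoKernel_nonneg f γ p)
  have hM : 0 ≤ max 1 T * C0 := mul_nonneg (zero_le_one.trans (le_max_left _ _)) (by linarith)
  have hgap : 0 < 1 - (2 : ℝ) ^ (-(m - 1 / p)) :=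
    sub_pos.2 (Real.rpow_lt_one_of_one_lt_of_neg one_lt_two (by linarith))
  have hmono : 1 - (2 : ℝ) ^ (-(m - 1 / p)) ≤ 1 - 2 ^ (-(γ u - 1 / p)) :=
    sub_le_sub_left (Real.rpow_le_rpow_of_exponent_le one_le_two (by linarith)) 1
  calc |f u - ⨍ x in dyadicIcc u θ R 0, f x|
      ≤ max 1 T * C0 * 2 ^ (1 / p) * I ^ (1 / p) * R ^ (γ u - 1 / p) /
          (1 - 2 ^ (-(γ u - 1 / p))) :=
        abs_sub_setAverage_dyadicIcc_le hθ hR (by linarith) (hf.mono hsub)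
          (abs_setAverage_dyadicIcc_succ_sub_le hp hC0 hγ hA hf hInt hθ hR hsub)
    _ ≤ max 1 T * C0 * 2 ^ (1 / p) * I ^ (1 / p) * R ^ (γ u - 1 / p) /
          (1 - 2 ^ (-(m - 1 / p))) :=
        div_le_div_of_nonneg_left (by positivity) hgap hmono
    _ = _ := by rw [dyadicConstant]; ring

theorem abs_sub_le_mul_rpow_max_of_lt (hp : 1 ≤ p) (hC0 : 1 ≤ C0)
    (hγ : ∀ t ∈ Icc 0 T, γ t ∈ Icc 0 1)
    (hA : ∀ t ∈ Icc 0 T, ∀ s ∈ Icc 0 T, s ≠ t → |t - s| ^ (γ t - γ s) ≤ C0)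
    (hf : ContinuousOn f (Icc 0 T))
    (hInt : IntegrableOn (gagliardoKernel f γ p) (Icc 0 T ×ˢ Icc 0 T))
    {m s t : ℝ} (hm : 1 / p < m) (hmγ : ∀ u ∈ Icc 0 T, m ≤ γ u) (hs : s ∈ Icc 0 T)
    (ht : t ∈ Icc 0 T) (hst : s < t) :
    |f t - f s| ≤ 2 * C0 * dyadicConstant T p C0 m *
      (∫ q in Icc 0 T ×ˢ Icc 0 T, gagliardoKernel f γ p q) ^ (1 / p) *
        |t - s| ^ max (γ t - 1 / p) (γ s - 1 / p) := by
  set K := dyadicConstant T p C0 m * (∫ q in Icc 0 T ×ˢ Icc 0 T, gagliardoKernel f γ p q) ^ (1 / p)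
  have hK : 0 ≤ K := mul_nonneg (dyadicConstant_pos (by linarith) hm).le
    (Real.rpow_nonneg (integral_nonneg (gagliardoKernel_nonneg f γ p)) _)
  have hR : 0 < t - s := sub_pos.2 hst
  have habs : |t - s| = t - s := abs_of_pos hR
  have hJt : dyadicIcc t 1 (t - s) 0 = Icc s t := by rw [dyadicIcc_zero]; congr 1 <;> ring
  have hJs : dyadicIcc s 0 (t - s) 0 = Icc s t := by rw [dyadicIcc_zero]; congr 1 <;> ring
  have hJ : Icc s t ⊆ Icc 0 T := Icc_subset_Icc hs.1 ht.2
  have hmean_t := abs_sub_setAverage_dyadicIcc_zero_le hp hC0 hγ hA hf hInt hm (hmγ t ht)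
    ⟨zero_le_one, le_rfl⟩ hR (hJt ▸ hJ)
  have hmean_s := abs_sub_setAverage_dyadicIcc_zero_le hp hC0 hγ hA hf hInt hm (hmγ s hs)
    ⟨le_rfl, zero_le_one⟩ hR (hJs ▸ hJ)
  rw [hJt] at hmean_t
  rw [hJs] at hmean_s
  have hexp_t := rpow_le_mul_rpow_max hR hC0 (a := γ t - 1 / p) (b := γ s - 1 / p)
    (by rw [sub_sub_sub_cancel_right, ← habs]; exact hA t ht s hs hst.ne)
  have hexp_s := rpow_le_mul_rpow_max hR hC0 (a := γ s - 1 / p) (b := γ t - 1 / p)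
    (by rw [sub_sub_sub_cancel_right, ← habs, abs_sub_comm]; exact hA s hs t ht hst.ne')
  rw [max_comm] at hexp_s
  calc |f t - f s| ≤ |f t - ⨍ x in Icc s t, f x| + |f s - ⨍ x in Icc s t, f x| := by
        simpa only [Real.dist_eq] using dist_triangle_right (f t) (f s) (⨍ x in Icc s t, f x)
    _ ≤ K * (t - s) ^ (γ t - 1 / p) + K * (t - s) ^ (γ s - 1 / p) := add_le_add hmean_t hmean_s
    _ ≤ K * (C0 * (t - s) ^ max (γ t - 1 / p) (γ s - 1 / p)) +
          K * (C0 * (t - s) ^ max (γ t - 1 / p) (γ s - 1 / p)) := by gcongr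
    _ = 2 * C0 * dyadicConstant T p C0 m *
          (∫ q in Icc 0 T ×ˢ Icc 0 T, gagliardoKernel f γ p q) ^ (1 / p) *
            |t - s| ^ max (γ t - 1 / p) (γ s - 1 / p) := by
        rw [habs]; ring

end Kernel

/-- Variable order Garsia–Rodemich–Rumsey / Besov–Hölder embedding: finiteness of the
generalized Gagliardo double integral implies a variable order Hölder bound of order
`α(t) = γ(t) − 1/p` (with exponent `max(α(t),α(s))` at the endpoints). -/
theorem stmt17 (T p : ℝ) (hT : 0 < T) (hp : 1 ≤ p)
    (γ : ℝ → ℝ) (C0 : ℝ)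
    (hγ : ∀ t ∈ Set.Icc (0:ℝ) T, 1 / p < γ t ∧ γ t ≤ 1)
    (hA1 : ∀ t ∈ Set.Icc (0:ℝ) T, ∀ s ∈ Set.Icc (0:ℝ) T, s ≠ t →
      |t - s| ^ (γ t - γ s) ≤ C0)
    (f : ℝ → ℝ) (hf : ContinuousOn f (Set.Icc 0 T))
    (hInt : IntegrableOn
      (fun q : ℝ × ℝ => |f q.1 - f q.2| ^ p / |q.1 - q.2| ^ (1 + max (γ q.1) (γ q.2) * p))
      (Set.Icc 0 T ×ˢ Set.Icc 0 T)) :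
    ∃ C > (0:ℝ), ∀ s ∈ Set.Icc (0:ℝ) T, ∀ t ∈ Set.Icc (0:ℝ) T, s ≠ t →
      |f t - f s| ≤ C *
        (∫ q in Set.Icc (0:ℝ) T ×ˢ Set.Icc (0:ℝ) T,
          |f q.1 - f q.2| ^ p / |q.1 - q.2| ^ (1 + max (γ q.1) (γ q.2) * p)) ^ (1 / p) *
        |t - s| ^ max (γ t - 1 / p) (γ s - 1 / p) := by
  have h0 : (0 : ℝ) ∈ Icc 0 T := left_mem_Icc.2 hT.le
  have hT' : T ∈ Icc 0 T := right_mem_Icc.2 hT.le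
  have hC0 : 1 ≤ C0 :=
    one_le_of_abs_sub_rpow_le hT.ne (hA1 T hT' 0 h0 hT.ne) (hA1 0 h0 T hT' hT.ne')
  have hγ01 : ∀ t ∈ Icc 0 T, γ t ∈ Icc 0 1 := fun t ht ↦
    ⟨(one_div_pos.2 (by linarith)).le.trans (hγ t ht).1.le, (hγ t ht).2⟩
  obtain ⟨a, ha, hmin⟩ := (lowerSemicontinuousOn_of_abs_sub_rpow_le hA1).exists_isMinOn
    (nonempty_Icc.2 hT.le) isCompact_Icc
  refine ⟨2 * C0 * dyadicConstant T p C0 (γ a),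
    mul_pos (by linarith) (dyadicConstant_pos (by linarith) (hγ a ha).1),
    fun s hs t ht hst ↦ ?_⟩
  rcases hst.lt_or_gt with hlt | hlt
  · exact abs_sub_le_mul_rpow_max_of_lt hp hC0 hγ01 hA1 hf hInt (hγ a ha).1 hmin hs ht hlt
  · have := abs_sub_le_mul_rpow_max_of_lt hp hC0 hγ01 hA1 hf hInt (hγ a ha).1 hmin ht hs hlt
    rwa [abs_sub_comm (f s), abs_sub_comm s, max_comm (γ s - 1 / p)] at this
end
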